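/- arXiv:math/0605401 — 4 statements merged into one kernel-verified Lean document; each statement's English description precedes it below -/
import Mathlib

section
/- For all natural numbers n, k, j with j \le n, the alternating sum \(\sum_{i=j}^{n} (-1)^{i+j-1} \binom{n}{i} \binom{i}{j} \binom{n-i}{2(k-j)} = 0\), provided \(n - 2k + j \ge 1\) (i.e., the inner binomial range is nontrivial). -/
/-!
Both `C(n,i) C(i,j) C(n-i,r)` and `C(n,j) C(n-j,r) C(n-j-r, i-j)` count the ways to split `n`
objects into blocks of sizes `j`, `i-j`, `r` and the rest. With `r = 2(k-j)`, the sum therefore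
becomes `-C(n,j) C(n-j,r)` times `∑_m (-1)^m C(n-j-r, m) = (1-1)^(n-j-r)`, which vanishes since
`n-j-r ≥ 1`.
-/

open Finset

theorem Nat.choose_mul_choose_sub_comm (N m r : ℕ) :
    N.choose m * (N - m).choose r = N.choose r * (N - r).choose m := by
  have hm := Nat.choose_mul (n := N) (Nat.le_add_right m r)
  have hr := Nat.choose_mul (n := N) (Nat.le_add_left r m)
  rw [Nat.add_sub_cancel_left] at hm
  rw [Nat.add_sub_cancel] at hr
  rw [← hm, ← hr, Nat.choose_symm_add]

theorem Nat.choose_mul_choose_mul_choose_sub (n r : ℕ) {i j : ℕ} (hji : j ≤ i) :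
    n.choose i * i.choose j * (n - i).choose r
      = n.choose j * (n - j).choose r * (n - j - r).choose (i - j) := by
  rw [Nat.choose_mul hji, Nat.mul_assoc, show n - i = n - j - (i - j) by omega,
    Nat.choose_mul_choose_sub_comm, ← Nat.mul_assoc]

theorem Int.alternating_sum_range_choose_of_lt {M L : ℕ} (hM : M ≠ 0) (hML : M < L) :
    ∑ m ∈ Finset.range L, ((-1) ^ m * M.choose m : ℤ) = 0 := by
  obtain ⟨d, rfl⟩ := Nat.exists_eq_add_of_lt hML
  rw [Nat.add_right_comm, sum_range_add, Int.alternating_sum_range_choose_of_ne hM, zero_add]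
  exact sum_eq_zero fun m _ ↦ by rw [Nat.choose_eq_zero_of_lt (by omega), Nat.cast_zero, mul_zero]

theorem stmt1_general (n k j : ℕ) (h : 2 * k + 1 ≤ n + j) :
    ∑ i ∈ Finset.Icc j n,
      (-1 : ℤ) ^ (i + j + 1) * (n.choose i : ℤ) * (i.choose j : ℤ) *
        (if k < j then 0 else ((n - i).choose (2 * (k - j)) : ℤ))
      = 0 := by
  rcases lt_or_ge k j with hkj | hjk
  · simp [hkj]
  set r := 2 * (k - j)
  set c : ℤ := n.choose j * (n - j).choose r
  calc _ = ∑ i ∈ Icc j n, -c * ((-1) ^ (i - j) * (n - j - r).choose (i - j)) := by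
        refine sum_congr rfl fun i hi ↦ ?_
        have hji := (mem_Icc.mp hi).1
        have hsign : (-1 : ℤ) ^ (i + j + 1) = -(-1) ^ (i - j) := by
          rw [show i + j + 1 = i - j + 2 * j + 1 by omega, pow_succ, pow_add, pow_mul]
          simp
        have hcount := congrArg (Nat.cast (R := ℤ)) (Nat.choose_mul_choose_mul_choose_sub n r hji)
        push_cast at hcount
        rw [if_neg hjk.not_gt, hsign]
        linear_combination (-(-1 : ℤ) ^ (i - j)) * hcount
    _ = -c * ∑ m ∈ range (n + 1 - j), (-1) ^ m * ((n - j - r).choose m : ℤ) := by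
        rw [← mul_sum, ← Ico_add_one_right_eq_Icc, sum_Ico_eq_sum_range]
        simp only [Nat.add_sub_cancel_left]
    _ = 0 := by rw [Int.alternating_sum_range_choose_of_lt (by omega) (by omega), mul_zero]

/-- Lemma (main:b): for `j ≤ n` and `n - 2k + j ≥ 1`,
`∑_{i=j}^n (-1)^{i+j-1} C(n,i) C(i,j) C(n-i, 2(k-j)) = 0`,
with the convention `C(n-i, 2(k-j)) = 0` when `k < j`. -/
theorem stmt1 (n k j : ℕ) (hjn : j ≤ n) (h : 2 * k + 1 ≤ n + j) :
    ∑ i ∈ Finset.Icc j n,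
      (-1 : ℤ) ^ (i + j + 1) * (n.choose i : ℤ) * (i.choose j : ℤ) *
        (if k < j then 0 else ((n - i).choose (2 * (k - j)) : ℤ))
      = 0 :=
  stmt1_general n k j h
end

section
/- For natural numbers n and k with 2k \le n, \(\sum_{i=k}^{n} \binom{i}{k} \binom{n}{2i} = 2^{n-2k-1}\frac{n}{n-k}\binom{n-k}{k}\) when n > 2k, i.e., applying the f-from-h transformation to the h-vector \(h_i = \binom{n}{2i}\) yields the claimed upper bound formula for f-vectors of tight spans. -/
/-!
Split the sum by parity: with `E n k = ∑ C(i,k) C(n,2i)` and `O n k = ∑ C(i,k) C(n,2i+1)`,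
Pascal's rule gives `O (n+1) k = O n k + E n k` and `E (n+1) (k+1) = O (n+1) (k+1) + O n k`,
so `O` alone satisfies `O (n+2) (k+1) = 2 O (n+1) (k+1) + O n k`. This yields
`O (2k+m+1) k = 2^m C(k+m, k)`, and `E = O + O` turns into the claimed formula after one
Pascal step and the absorption identity `(a+1) C(a,b) = (b+1) C(a+1,b+1)`.
-/

open Finset

def evenBinomSum (n k : ℕ) : ℕ := ∑ i ∈ range (n + 1), i.choose k * n.choose (2 * i)

def oddBinomSum (n k : ℕ) : ℕ := ∑ i ∈ range (n + 1), i.choose k * n.choose (2 * i + 1)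

lemma sum_Icc_eq_evenBinomSum (n k : ℕ) :
    ∑ i ∈ Icc k n, i.choose k * n.choose (2 * i) = evenBinomSum n k := by
  refine sum_subset (fun i hi => by simp only [mem_Icc, mem_range] at hi ⊢; omega) ?_
  intro i _ hi
  simp only [mem_Icc, not_and_or, not_le] at hi
  rcases hi with hik | hni
  · simp [Nat.choose_eq_zero_of_lt hik]
  · simp [Nat.choose_eq_zero_of_lt (show n < 2 * i by omega)]

lemma oddBinomSum_eq_zero {n k : ℕ} (h : n ≤ 2 * k) : oddBinomSum n k = 0 := by
  refine sum_eq_zero fun i _ => ?_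
  rcases lt_or_ge i k with hik | hik
  · simp [Nat.choose_eq_zero_of_lt hik]
  · simp [Nat.choose_eq_zero_of_lt (show n < 2 * i + 1 by omega)]

lemma oddBinomSum_succ (n k : ℕ) :
    oddBinomSum (n + 1) k = oddBinomSum n k + evenBinomSum n k := by
  rw [oddBinomSum, sum_range_succ,
    Nat.choose_eq_zero_of_lt (show n + 1 < 2 * (n + 1) + 1 by omega), mul_zero, add_zero,
    oddBinomSum, evenBinomSum, ← sum_add_distrib]
  refine sum_congr rfl fun i _ => ?_
  rw [Nat.choose_succ_succ', mul_add, add_comm]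

lemma evenBinomSum_succ (n k : ℕ) :
    evenBinomSum (n + 1) k
      = evenBinomSum n k + ∑ i ∈ range (n + 1), (i + 1).choose k * n.choose (2 * i + 1) := by
  have shifted : evenBinomSum n k
      = ∑ i ∈ range (n + 1), (i + 1).choose k * n.choose (2 * i + 2) + (0 : ℕ).choose k := by
    calc evenBinomSum n k = ∑ i ∈ range (n + 2), i.choose k * n.choose (2 * i) := by
          rw [sum_range_succ, Nat.choose_eq_zero_of_lt (show n < 2 * (n + 1) by omega), mul_zero,
            add_zero, evenBinomSum]
      _ = _ := by simp only [sum_range_succ', mul_add, mul_one, mul_zero, Nat.choose_zero_right]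
  rw [evenBinomSum, sum_range_succ', shifted, add_right_comm, ← sum_add_distrib]
  simp only [mul_zero, Nat.choose_zero_right, mul_one]
  congr 1
  refine sum_congr rfl fun i _ => ?_
  rw [show 2 * (i + 1) = 2 * i + 1 + 1 by ring, Nat.choose_succ_succ', mul_add, add_comm]

lemma evenBinomSum_succ_zero (n : ℕ) : evenBinomSum (n + 1) 0 = oddBinomSum (n + 1) 0 := by
  rw [evenBinomSum_succ, oddBinomSum_succ, add_comm]
  simp only [Nat.choose_zero_right, oddBinomSum]

lemma evenBinomSum_succ_succ (n k : ℕ) :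
    evenBinomSum (n + 1) (k + 1) = oddBinomSum (n + 1) (k + 1) + oddBinomSum n k := by
  simp only [evenBinomSum_succ, oddBinomSum_succ, Nat.choose_succ_succ', add_mul, sum_add_distrib]
  rw [← oddBinomSum, ← oddBinomSum]
  ring

lemma oddBinomSum_add_two_zero (n : ℕ) : oddBinomSum (n + 2) 0 = 2 * oddBinomSum (n + 1) 0 := by
  rw [oddBinomSum_succ (n + 1), evenBinomSum_succ_zero, two_mul]

lemma oddBinomSum_add_two_succ (n k : ℕ) :
    oddBinomSum (n + 2) (k + 1) = 2 * oddBinomSum (n + 1) (k + 1) + oddBinomSum n k := by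
  rw [oddBinomSum_succ (n + 1), evenBinomSum_succ_succ]
  ring

lemma oddBinomSum_succ_zero (m : ℕ) : oddBinomSum (m + 1) 0 = 2 ^ m := by
  induction m with
  | zero => rfl
  | succ m ih => rw [oddBinomSum_add_two_zero, ih, pow_succ, mul_comm]

lemma oddBinomSum_closed (k m : ℕ) :
    oddBinomSum (2 * k + m + 1) k = 2 ^ m * (k + m).choose k := by
  induction k generalizing m with
  | zero => simpa using oddBinomSum_succ_zero m
  | succ k ihk =>
    induction m with
    | zero =>
      rw [show 2 * (k + 1) + 0 + 1 = 2 * k + 1 + 2 by ring, oddBinomSum_add_two_succ,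
        oddBinomSum_eq_zero (by omega), mul_zero, zero_add, ihk 0]
      simp
    | succ m ihm =>
      have pascal : (k + m + 2).choose (k + 1) = (k + m + 1).choose k + (k + m + 1).choose (k + 1) :=
        Nat.choose_succ_succ' _ _
      rw [show 2 * (k + 1) + (m + 1) + 1 = 2 * k + (m + 1) + 1 + 2 by ring,
        oddBinomSum_add_two_succ, show 2 * k + (m + 1) + 1 + 1 = 2 * (k + 1) + m + 1 by ring,
        ihm, ihk, show k + 1 + (m + 1) = k + m + 2 by ring, pascal]
      ring_nf

lemma evenBinomSum_mul_closed (k m : ℕ) :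
    evenBinomSum (2 * k + m + 1) k * (k + m + 1) = 2 ^ m * (2 * k + m + 1) * (k + m + 1).choose k := by
  cases k with
  | zero =>
    simp [evenBinomSum_succ_zero, oddBinomSum_succ_zero]
  | succ k =>
    have pascal : (k + m + 2).choose (k + 1) = (k + m + 1).choose k + (k + m + 1).choose (k + 1) :=
      Nat.choose_succ_succ' _ _
    have absorption : (k + m + 2) * (k + m + 1).choose k = (k + m + 2).choose (k + 1) * (k + 1) :=
      Nat.add_one_mul_choose_eq _ _
    rw [show 2 * (k + 1) + m + 1 = 2 * k + m + 2 + 1 by ring, evenBinomSum_succ_succ,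
      show 2 * k + m + 2 + 1 = 2 * (k + 1) + m + 1 by ring, oddBinomSum_closed,
      show 2 * k + m + 2 = 2 * k + (m + 1) + 1 by ring, oddBinomSum_closed,
      show k + 1 + m + 1 = k + m + 2 by ring, show k + (m + 1) = k + m + 1 by ring,
      show k + 1 + m = k + m + 1 by ring]
    zify at pascal absorption ⊢
    linear_combination (-(2 : ℤ) ^ m * (k + m + 2)) * pascal + 2 ^ m * absorption

/-- Applying the f-from-h transformation to the h-vector `h_i = C(n, 2i)` yields
`∑_{i=k}^n C(i,k) C(n,2i) = 2^{n-2k-1} (n/(n-k)) C(n-k,k)`, for `n > 2k`. -/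
theorem stmt4 (n k : ℕ) (h : 2 * k < n) :
    ∑ i ∈ Finset.Icc k n, ((i.choose k : ℚ) * (n.choose (2 * i) : ℚ))
      = 2 ^ (n - 2 * k - 1) * ((n : ℚ) / ((n : ℚ) - (k : ℚ))) * ((n - k).choose k : ℚ) := by
  obtain ⟨m, rfl⟩ : ∃ m, n = 2 * k + m + 1 := ⟨n - 2 * k - 1, by omega⟩
  have closed := evenBinomSum_mul_closed k m
  rw [← sum_Icc_eq_evenBinomSum] at closed
  rw [show 2 * k + m + 1 - 2 * k - 1 = m by omega, show 2 * k + m + 1 - k = k + m + 1 by omega,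
    show ((2 * k + m + 1 : ℕ) : ℚ) - k = k + m + 1 by push_cast; ring]
  field_simp
  exact_mod_cast closed
end

section
/- Define the metric \(d^n_{\max}(i,j) = 1 + \frac{1}{n^2 + in + j}\) for \(1 \le i < j \le n\) (extended symmetrically, zero on the diagonal). Then for all \(1 \le i \le j \le k \le l \le n\), \(d^n_{\max}(i,j) - d^n_{\max}(i,k) \le d^n_{\max}(j,l) - d^n_{\max}(k,l)\). -/
set_option maxHeartbeats 1000000

/-- The metric `d^n_max` on `{1,…,n}`: `d(i,j) = 1 + 1/(n² + i n + j)` for `i < j`,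
extended symmetrically, with zero diagonal. -/
noncomputable def dmax (n i j : ℕ) : ℝ :=
  if i = j then 0
  else if i < j then 1 + 1 / ((n : ℝ) ^ 2 + i * n + j)
  else 1 + 1 / ((n : ℝ) ^ 2 + j * n + i)

lemma dmax_self (n i : ℕ) : dmax n i i = 0 := by simp [dmax]

lemma dmax_lt (n : ℕ) {i j : ℕ} (h : i < j) :
    dmax n i j = 1 + 1 / ((n : ℝ) ^ 2 + i * n + j) := by
  simp [dmax, h, h.ne]

lemma key_poly (N x y z w : ℝ) (h1 : 1 ≤ x) (hxy : x ≤ y) (hyz : y ≤ z) (hzw : z ≤ w)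
    (hwN : w ≤ N) (hN : 2 ≤ N) :
    (N^2 + y*N + w) * (N^2 + z*N + w) ≤ N * ((N^2 + x*N + y) * (N^2 + x*N + z)) := by
  have hx0 : (0:ℝ) ≤ x := by linarith
  have hy1 : (1:ℝ) ≤ y := by linarith
  have hz1 : (1:ℝ) ≤ z := by linarith
  have hyN : y ≤ N := by linarith
  have hzN : z ≤ N := by linarith
  have hN0 : (0:ℝ) ≤ N := by linarith
  have step1 : (N^2 + y*N + w) * (N^2 + z*N + w) ≤ (N^2 + y*N + N) * (N^2 + z*N + N) := by
    have hA : (0:ℝ) ≤ N^2 + y*N + w := by nlinarith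
    have hB : (0:ℝ) ≤ N^2 + z*N + N := by nlinarith
    nlinarith [mul_nonneg hA hB]
  have step3 : N * ((N^2 + N + y) * (N^2 + N + z)) ≤ N * ((N^2 + x*N + y) * (N^2 + x*N + z)) := by
    have h1' : N^2 + N + y ≤ N^2 + x*N + y := by nlinarith
    have h2' : N^2 + N + z ≤ N^2 + x*N + z := by nlinarith
    have hp : (0:ℝ) ≤ N^2 + N + y := by nlinarith
    have hq : (0:ℝ) ≤ N^2 + x*N + z := by nlinarith
    have := mul_le_mul h1' h2' (by nlinarith) (by nlinarith)
    nlinarith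
  have step2 : (N^2 + y*N + N) * (N^2 + z*N + N) ≤ N * ((N^2 + N + y) * (N^2 + N + z)) := by
    -- equivalent to N*(N+y+1)*(N+z+1) ≤ (N^2+N+y)*(N^2+N+z)
    have hyz2 : y * z ≤ N^2 := by nlinarith
    have hyz1 : (1:ℝ) ≤ y * z := by nlinarith
    have hNyz : N * (y*z) ≤ N * N^2 := by nlinarith
    have hN2 : (4:ℝ) ≤ N^2 := by nlinarith
    have hN4 : 4 * N^2 ≤ N^2 * N^2 := by nlinarith
    nlinarith
  linarith
/-- First inequality of the key lemma on `d^n_max`: for `1 ≤ i ≤ j ≤ k ≤ l ≤ n`,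
`d(i,j) - d(i,k) ≤ d(j,l) - d(k,l)`. -/
theorem stmt8 (n i j k l : ℕ) (h1 : 1 ≤ i) (hij : i ≤ j) (hjk : j ≤ k) (hkl : k ≤ l)
    (hln : l ≤ n) :
    dmax n i j - dmax n i k ≤ dmax n j l - dmax n k l := by
  rcases eq_or_lt_of_le hjk with rfl | hjk
  · simp
  have hik : i < k := lt_of_le_of_lt hij hjk
  have hjl : j < l := lt_of_lt_of_le hjk hkl
  have hN : (2:ℝ) ≤ (n:ℝ) := by exact_mod_cast (by omega : 2 ≤ n)
  have hi1 : (1:ℝ) ≤ (i:ℝ) := by exact_mod_cast h1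
  have hj1 : (1:ℝ) ≤ (j:ℝ) := by exact_mod_cast (le_trans h1 hij)
  have hk1 : (1:ℝ) ≤ (k:ℝ) := by exact_mod_cast (by omega : 1 ≤ k)
  have hl1 : (1:ℝ) ≤ (l:ℝ) := by exact_mod_cast (by omega : 1 ≤ l)
  have hjn : (j:ℝ) ≤ (n:ℝ) := by exact_mod_cast (by omega : j ≤ n)
  have hkn : (k:ℝ) ≤ (n:ℝ) := by exact_mod_cast (by omega : k ≤ n)
  have hln' : (l:ℝ) ≤ (n:ℝ) := by exact_mod_cast hln
  have hik' : (i:ℝ) ≤ (k:ℝ) := by exact_mod_cast hik.le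
  have hij' : (i:ℝ) ≤ (j:ℝ) := by exact_mod_cast hij
  have hjk' : (j:ℝ) ≤ (k:ℝ) := by exact_mod_cast hjk.le
  have hkl' : (k:ℝ) ≤ (l:ℝ) := by exact_mod_cast hkl
  have hC : (0:ℝ) < (n:ℝ)^2 + i*n + j := by nlinarith
  have hD : (0:ℝ) < (n:ℝ)^2 + i*n + k := by nlinarith
  have hA : (0:ℝ) < (n:ℝ)^2 + j*n + l := by nlinarith
  have hB : (0:ℝ) < (n:ℝ)^2 + k*n + l := by nlinarith
  rcases eq_or_lt_of_le hij with rfl | hij2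
  · rcases eq_or_lt_of_le hkl with rfl | hkl2
    · rw [dmax_self, dmax_lt n hik, dmax_self]
      have := one_div_pos.mpr hD
      linarith
    · rw [dmax_self, dmax_lt n hik, dmax_lt n hjl, dmax_lt n hkl2]
      have h1D := one_div_pos.mpr hD
      have h1A := one_div_pos.mpr hA
      have hB1 : (1:ℝ) ≤ (n:ℝ)^2 + k*n + l := by nlinarith
      have := (div_le_one hB).mpr hB1
      linarith
  · rcases eq_or_lt_of_le hkl with rfl | hkl2
    · rw [dmax_lt n hij2, dmax_lt n hik, dmax_lt n hjl, dmax_self]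
      have h1D := one_div_pos.mpr hD
      have h1A := one_div_pos.mpr hA
      have hC1 : (1:ℝ) ≤ (n:ℝ)^2 + i*n + j := by nlinarith
      have := (div_le_one hC).mpr hC1
      linarith
    · rw [dmax_lt n hij2, dmax_lt n hik, dmax_lt n hjl, dmax_lt n hkl2]
      have hgoal : 1 / ((n:ℝ)^2 + i*n + j) - 1 / ((n:ℝ)^2 + i*n + k)
          ≤ 1 / ((n:ℝ)^2 + j*n + l) - 1 / ((n:ℝ)^2 + k*n + l) := by
        rw [div_sub_div _ _ hC.ne' hD.ne', div_sub_div _ _ hA.ne' hB.ne',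
          div_le_div_iff₀ (mul_pos hC hD) (mul_pos hA hB)]
        have key := key_poly (n:ℝ) i j k l hi1 hij' hjk' hkl' hln' hN
        have hkj : (0:ℝ) ≤ (k:ℝ) - j := by linarith
        have key2 := mul_le_mul_of_nonneg_left key hkj
        calc (1 * ((n:ℝ)^2 + i*n + k) - ((n:ℝ)^2 + i*n + j) * 1) * (((n:ℝ)^2 + j*n + l) * ((n:ℝ)^2 + k*n + l))
            = ((k:ℝ) - j) * (((n:ℝ)^2 + j*n + l) * ((n:ℝ)^2 + k*n + l)) := by ring
          _ ≤ ((k:ℝ) - j) * ((n:ℝ) * (((n:ℝ)^2 + i*n + j) * ((n:ℝ)^2 + i*n + k))) := key2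
          _ = (1 * ((n:ℝ)^2 + k*n + l) - ((n:ℝ)^2 + j*n + l) * 1) * (((n:ℝ)^2 + i*n + j) * ((n:ℝ)^2 + i*n + k)) := by ring
      linarith
end

section
/- With \(d^n_{\max}(i,j) = 1 + \frac{1}{n^2+in+j}\) for i < j as above, for all \(1 \le i \le j \le k \le l \le n\) we have \(d^n_{\max}(i,l) - d^n_{\max}(i,k) \le d^n_{\max}(j,l) - d^n_{\max}(j,k)\). -/
lemma dmax_aux {a b k l : ℝ} (hab : a ≤ b) (hkl : k ≤ l) (h1 : 0 < a + k)
    (h2 : 0 < b + k) (h3 : 0 < a + l) (h4 : 0 < b + l) :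
    1/(a+l) - 1/(a+k) ≤ 1/(b+l) - 1/(b+k) := by
  rw [div_sub_div _ _ (ne_of_gt h3) (ne_of_gt h1), div_sub_div _ _ (ne_of_gt h4) (ne_of_gt h2),
    div_le_div_iff₀ (by positivity) (by positivity)]
  nlinarith [mul_nonneg (sub_nonneg.2 hkl) (sub_nonneg.2 hab), h1, h2, h3, h4,
    mul_nonneg (mul_nonneg (sub_nonneg.2 hkl) (sub_nonneg.2 hab)) (by linarith : (0:ℝ) ≤ a + b + k + l)]

/-- Second inequality of the key lemma on `d^n_max`: for `1 ≤ i ≤ j ≤ k ≤ l ≤ n`,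
`d(i,l) - d(i,k) ≤ d(j,l) - d(j,k)`. -/
theorem stmt9 (n i j k l : ℕ) (h1 : 1 ≤ i) (hij : i ≤ j) (hjk : j ≤ k) (hkl : k ≤ l)
    (hln : l ≤ n) :
    dmax n i l - dmax n i k ≤ dmax n j l - dmax n j k := by
  have hn : 1 ≤ n := le_trans (h1.trans (hij.trans (hjk.trans hkl))) hln
  have hn0 : (0:ℝ) < n := by exact_mod_cast hn
  have hn2 : (0:ℝ) < (n:ℝ)^2 := by positivity
  have pos : ∀ a b : ℕ, (0:ℝ) < (n:ℝ)^2 + a*n + b := by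
    intro a b
    have : (0:ℝ) ≤ (a:ℝ)*n := by positivity
    have : (0:ℝ) ≤ (b:ℝ) := by positivity
    linarith
  rcases eq_or_lt_of_le hij with rfl | hij'
  · exact le_refl _
  rcases eq_or_lt_of_le hkl with rfl | hkl'
  · simp
  have hik : i < k := hij'.trans_le hjk
  have hil : i < l := hik.trans hkl'
  have hjl : j < l := hjk.trans_lt hkl'
  rcases eq_or_lt_of_le hjk with rfl | hjk'
  · -- j = k case
    simp only [dmax, if_neg (Nat.ne_of_lt hik), if_pos hik, if_neg (Nat.ne_of_lt hil),
      if_pos hil, if_neg (Nat.ne_of_lt hjl), if_pos hjl, if_pos rfl, if_true]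
    have hB := pos i j
    have hA := pos i l
    have hC := pos j l
    have h1A : 1/((n:ℝ)^2 + i*n + l) ≤ 1/((n:ℝ)^2 + i*n + j) := by
      apply one_div_le_one_div_of_le hB
      have : (j:ℝ) ≤ l := by exact_mod_cast hjl.le
      linarith
    have : (0:ℝ) < 1/((n:ℝ)^2 + j*n + l) := by positivity
    linarith
  · have hjk'' : j < k := hjk'
    simp only [dmax, if_neg (Nat.ne_of_lt hik), if_pos hik, if_neg (Nat.ne_of_lt hil),
      if_pos hil, if_neg (Nat.ne_of_lt hjl), if_pos hjl, if_neg (Nat.ne_of_lt hjk''),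
      if_pos hjk'']
    have key := dmax_aux (a := (n:ℝ)^2 + i*n) (b := (n:ℝ)^2 + j*n) (k := (k:ℝ)) (l := (l:ℝ))
      (by
        have hij2 : (i:ℝ) ≤ j := by exact_mod_cast hij
        nlinarith)
      (by exact_mod_cast hkl'.le) (pos i k) (pos j k) (pos i l) (pos j l)
    linarith [key]
end
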